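/- Let G be a finite group with a normal subgroup S that is simple and nonabelian and whose centralizer in G is trivial (so G is almost simple with socle S), and let N be the normalizer in Sym(G) of the subgroup S*. Then S is an N-block, and every N-block of size at least 2 containing the identity of G contains S; in other words, the minimal block of N coincides with S. -/

import Mathlib

/-- The subgroup of `Sym(A)` consisting of the right translations `x ↦ x * g`. -/
def rightMuls (A : Type*) [Group A] : Subgroup (Equiv.Perm A) :=
  (MulAction.toPermHom Aᵐᵒᵖ A).range

/-- The holomorph of `A`, i.e. the normalizer in `Sym(A)` of the group of right
translations. -/
def Hol (A : Type*) [Group A] : Subgroup (Equiv.Perm A) :=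
  Subgroup.normalizer ((rightMuls A : Subgroup (Equiv.Perm A)) : Set (Equiv.Perm A))

/-- `D(2,A)`: the subgroup of `Sym(A)` generated by `Hol(A)` and the inversion
permutation `g ↦ g⁻¹`. -/
def D2 (A : Type*) [Group A] : Subgroup (Equiv.Perm A) :=
  Hol A ⊔ Subgroup.closure {Equiv.inv A}

/-- The homomorphism `H × H →* Sym(A)` sending `(h₁, h₂)` to `x ↦ h₁ * x * h₂⁻¹`. -/
def biTransHom {A : Type*} [Group A] (H : Subgroup A) : H × H →* Equiv.Perm A where
  toFun p := (Equiv.mulLeft (p.1 : A)).trans (Equiv.mulRight ((p.2 : A)⁻¹))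
  map_one' := by ext x; simp
  map_mul' p q := by ext x; simp [mul_assoc]

/-- `H*`: the subgroup of `Sym(A)` of all permutations `x ↦ h₁ * x * h₂` with
`h₁, h₂ ∈ H`. -/
def starGroup {A : Type*} [Group A] (H : Subgroup A) : Subgroup (Equiv.Perm A) :=
  (biTransHom H).range

/-- The automorphism group of the Cayley graph `Cay(A, X)`: all permutations `f`
of `A` such that `h * g⁻¹ ∈ X ↔ f h * (f g)⁻¹ ∈ X` for all `g, h`. -/
def cayAut {A : Type*} [Group A] (X : Set A) : Subgroup (Equiv.Perm A) where
  carrier := {f : Equiv.Perm A | ∀ g h : A, h * g⁻¹ ∈ X ↔ f h * (f g)⁻¹ ∈ X}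
  one_mem' := by intro g h; simp
  mul_mem' := by
    intro a b ha hb g h
    simpa [Equiv.Perm.mul_apply] using (hb g h).trans (ha (b g) (b h))
  inv_mem' := by
    intro a ha g h
    simpa using (ha (a⁻¹ g) (a⁻¹ h)).symm

/-- A `K`-block: a subset `B` such that every `k ∈ K` either fixes `B` setwise or
moves it to a disjoint set. -/
def IsBlock {A : Type*} [Group A] (K : Subgroup (Equiv.Perm A)) (B : Set A) : Prop :=
  ∀ k ∈ K, (k : Equiv.Perm A) '' B = B ∨ ((k : Equiv.Perm A) '' B) ∩ B = ∅

/-- The minimal block of `K`: the intersection of all `K`-blocks of size at least 2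
containing the identity. -/
def minBlock {A : Type*} [Group A] (K : Subgroup (Equiv.Perm A)) : Set A :=
  ⋂₀ {B : Set A | IsBlock K B ∧ (1 : A) ∈ B ∧ 2 ≤ B.ncard}

/-- The right coset `L * g`. -/
def rcoset {A : Type*} [Group A] (L : Subgroup A) (g : A) : Set A :=
  {x : A | x * g⁻¹ ∈ L}

/-- `K_𝔏`: the subgroup of all elements of `K` mapping each right coset of `L` to
itself. -/
def stabCosets {A : Type*} [Group A] (K : Subgroup (Equiv.Perm A)) (L : Subgroup A) :
    Subgroup (Equiv.Perm A) where
  carrier := {f : Equiv.Perm A | f ∈ K ∧ ∀ x : A, f x * x⁻¹ ∈ L}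
  one_mem' := ⟨K.one_mem, fun x => by simpa using L.one_mem⟩
  mul_mem' := by
    rintro a b ⟨haK, ha⟩ ⟨hbK, hb⟩
    refine ⟨K.mul_mem haK hbK, fun x => ?_⟩
    have := L.mul_mem (ha (b x)) (hb x)
    simpa [Equiv.Perm.mul_apply, mul_assoc] using this
  inv_mem' := by
    rintro a ⟨haK, ha⟩
    refine ⟨K.inv_mem haK, fun x => ?_⟩
    have := L.inv_mem (ha (a⁻¹ x))
    simpa [mul_inv_rev] using this

/-- Two subsets `X`, `X'` are equivalent (w.r.t. `K` and `L`) if every element of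
`K_𝔏` fixes `X` pointwise iff it fixes `X'` pointwise. -/
def cosetEquiv {A : Type*} [Group A] (K : Subgroup (Equiv.Perm A)) (L : Subgroup A)
    (X X' : Set A) : Prop :=
  ∀ f ∈ stabCosets K L,
    ((∀ x ∈ X, (f : Equiv.Perm A) x = x) ↔ (∀ x ∈ X', (f : Equiv.Perm A) x = x))

/-- The union `U` of the right cosets of `L` that are equivalent to `L`. -/
def Uset {A : Type*} [Group A] (K : Subgroup (Equiv.Perm A)) (L : Subgroup A) : Set A :=
  {x : A | cosetEquiv K L (L : Set A) (rcoset L x)}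

/-- A permutation group `K` is 2-closed if it contains every permutation `f` such
that every pair of points can be moved as by `f` by some element of `K`. -/
def Is2Closed {A : Type*} [Group A] (K : Subgroup (Equiv.Perm A)) : Prop :=
  ∀ f : Equiv.Perm A, (∀ a b : A, ∃ k ∈ K, (k : Equiv.Perm A) a = f a ∧ k b = f b) → f ∈ K


/-!
Conjugating `S*` by a left or right translation of `G` gives `S*` back, since `S` is normal,
so `N` contains all of `G*`. Elements of `N` permute the cosets of `S`, which makes `S` a block.
Conversely, a block `B ∋ 1` of a group containing `G*` is stable under right translations by its
own elements and under conjugation, hence is a normal subgroup of `G`. A nontrivial normal subgroup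
`B` either contains `S` or meets it trivially; in the latter case `[B, S] = 1`, so `B` centralizes
`S`, which is impossible as `C_G(S) = 1`.
-/

open Subgroup

section Blocks

variable {G : Type*} [Group G]

@[simp]
lemma biTransHom_apply (H : Subgroup G) (p : H × H) (x : G) :
    biTransHom H p x = (p.1 : G) * x * (p.2 : G)⁻¹ :=
  rfl

lemma IsBlock.apply_mem {K : Subgroup (Equiv.Perm G)} {B : Set G} (hB : IsBlock K B)
    {k : Equiv.Perm G} (hk : k ∈ K) {x y : G} (hx : x ∈ B) (hkx : k x ∈ B) (hy : y ∈ B) :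
    k y ∈ B := by
  rcases hB k hk with hfix | hdisj
  · exact hfix ▸ Set.mem_image_of_mem k hy
  · exact (Set.eq_empty_iff_forall_notMem.1 hdisj _ ⟨Set.mem_image_of_mem k hx, hkx⟩).elim

lemma isBlock_coe_of_forall_mem_iff {K : Subgroup (Equiv.Perm G)} {S : Subgroup G}
    (hK : ∀ k ∈ K, ∀ x y, k x * (k y)⁻¹ ∈ S ↔ x * y⁻¹ ∈ S) : IsBlock K (S : Set G) := by
  intro k hk
  have hmem_image : ∀ x, x ∈ k '' S ↔ x * (k 1)⁻¹ ∈ S := fun x => by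
    simpa [Set.mem_image_equiv] using (hK k hk (k.symm x) 1).symm
  by_cases hk1 : k 1 ∈ S
  · left
    ext x
    rw [hmem_image, SetLike.mem_coe, mul_mem_cancel_right (inv_mem hk1)]
  · right
    refine Set.eq_empty_of_forall_notMem fun x ⟨hx, hxS⟩ => hk1 ?_
    have := mul_mem (inv_mem ((hmem_image x).1 hx)) hxS
    rwa [mul_inv_rev, inv_inv, inv_mul_cancel_right] at this

lemma IsBlock.exists_normal_eq {K : Subgroup (Equiv.Perm G)} (hK : starGroup ⊤ ≤ K) {B : Set G}
    (hB : IsBlock K B) (h1 : (1 : G) ∈ B) : ∃ H : Subgroup G, H.Normal ∧ (H : Set G) = B := by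
  have hmem : ∀ g h, biTransHom ⊤ (⟨g, mem_top g⟩, ⟨h, mem_top h⟩) ∈ K :=
    fun _ _ => hK ⟨_, rfl⟩
  have mul_mem : ∀ {a b}, a ∈ B → b ∈ B → a * b ∈ B := fun {a b} ha hb => by
    simpa using hB.apply_mem (hmem 1 b⁻¹) h1 (by simpa using hb) ha
  have inv_mem : ∀ {b}, b ∈ B → b⁻¹ ∈ B := fun {b} hb => by
    simpa using hB.apply_mem (hmem 1 b) hb (by simpa using h1) h1
  have conj_mem : ∀ b ∈ B, ∀ g : G, g * b * g⁻¹ ∈ B := fun b hb g => by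
    simpa using hB.apply_mem (hmem g g) h1 (by simpa using h1) hb
  exact ⟨({ carrier := B, one_mem' := h1, mul_mem' := mul_mem, inv_mem' := inv_mem } : Subgroup G),
    ⟨conj_mem⟩, rfl⟩

lemma minBlock_eq {K : Subgroup (Equiv.Perm G)} {B : Set G} (hB : IsBlock K B) (h1 : (1 : G) ∈ B)
    (hcard : 2 ≤ B.ncard)
    (hmin : ∀ B' : Set G, IsBlock K B' → (1 : G) ∈ B' → 2 ≤ B'.ncard → B ⊆ B') :
    minBlock K = B := by
  unfold minBlock
  exact subset_antisymm (Set.sInter_subset_of_mem ⟨hB, h1, hcard⟩)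
    (Set.subset_sInter fun B' ⟨hB', h1', hcard'⟩ => hmin B' hB' h1' hcard')

end Blocks

section Normalizer

variable {G : Type*} [Group G] {S : Subgroup G}

lemma conj_mem_starGroup (hS : S.Normal) {a f : Equiv.Perm G} (ha : a ∈ starGroup ⊤)
    (hf : f ∈ starGroup S) : a * f * a⁻¹ ∈ starGroup S := by
  obtain ⟨⟨g, h⟩, rfl⟩ := ha
  obtain ⟨⟨s, t⟩, rfl⟩ := hf
  refine ⟨(⟨g * s * g⁻¹, hS.conj_mem _ s.2 g⟩, ⟨h * t * h⁻¹, hS.conj_mem _ t.2 h⟩), ?_⟩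
  ext x
  rw [← map_inv (biTransHom ⊤)]
  simp [Equiv.Perm.mul_apply, mul_assoc]

lemma starGroup_top_le_normalizer (hS : S.Normal) :
    starGroup ⊤ ≤ normalizer (starGroup S : Set (Equiv.Perm G)) := by
  refine fun a ha => mem_normalizer_iff.2 fun f => ⟨conj_mem_starGroup hS ha, fun hf => ?_⟩
  simpa [mul_assoc] using conj_mem_starGroup hS (inv_mem ha) hf

lemma apply_mul_mul_inv_apply_mem (hS : S.Normal) {k : Equiv.Perm G}
    (hk : k ∈ normalizer (starGroup S : Set (Equiv.Perm G))) {s : G} (hs : s ∈ S) (y : G) :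
    k (s * y) * (k y)⁻¹ ∈ S := by
  obtain ⟨⟨t₁, t₂⟩, ht⟩ := (mem_normalizer_iff.1 hk (biTransHom S (⟨s, hs⟩, 1))).1 ⟨_, rfl⟩
  have hky : k (s * y) = t₁ * k y * (t₂ : G)⁻¹ := by
    simpa [Equiv.Perm.mul_apply] using (DFunLike.congr_fun ht (k y)).symm
  rw [hky, mul_assoc, mul_assoc, ← mul_assoc (k y)]
  exact mul_mem t₁.2 (hS.conj_mem _ (inv_mem t₂.2) _)

lemma apply_mul_inv_apply_mem_iff (hS : S.Normal) {k : Equiv.Perm G}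
    (hk : k ∈ normalizer (starGroup S : Set (Equiv.Perm G))) (x y : G) :
    k x * (k y)⁻¹ ∈ S ↔ x * y⁻¹ ∈ S := by
  refine ⟨fun h => ?_, fun h => by simpa using apply_mul_mul_inv_apply_mem hS hk h y⟩
  simpa using apply_mul_mul_inv_apply_mem hS (inv_mem hk) h (k y)

end Normalizer

lemma Subgroup.le_of_normal_of_centralizer_eq_bot {G : Type*} [Group G] {S H : Subgroup G} [S.Normal]
    [H.Normal] [IsSimpleGroup S] (hcent : centralizer (S : Set G) = ⊥) (hH : H ≠ ⊥) : S ≤ H := by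
  refine (IsSimpleGroup.eq_bot_or_eq_top_of_normal _ (Normal.subgroupOf ‹_› S)).elim
    (fun hbot => absurd ?_ hH) subgroupOf_eq_top.1
  have hcomm : ⁅H, S⁆ = ⊥ :=
    eq_bot_iff.2 ((commutator_le_inf H S).trans (subgroupOf_eq_bot.1 hbot).le_bot)
  exact eq_bot_iff.2 (hcent ▸ commutator_eq_bot_iff_le_centralizer.1 hcomm)

theorem minBlock_of_normalizer_eq_socle_general (G : Type*) [Group G] [Fintype G]
    (S : Subgroup G) (hSnormal : S.Normal) (hSsimple : IsSimpleGroup S)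
    (hScent : ∀ g : G, (∀ s ∈ S, g * s = s * g) → g = 1)
    : IsBlock (Subgroup.normalizer ((starGroup S : Subgroup (Equiv.Perm G)) : Set (Equiv.Perm G))) (S : Set G) ∧
    (∀ B : Set G, IsBlock (Subgroup.normalizer ((starGroup S : Subgroup (Equiv.Perm G)) : Set (Equiv.Perm G))) B → (1 : G) ∈ B → 2 ≤ B.ncard →
      (S : Set G) ⊆ B) ∧
    minBlock (Subgroup.normalizer ((starGroup S : Subgroup (Equiv.Perm G)) : Set (Equiv.Perm G))) = (S : Set G) := by
  have hcent : centralizer (S : Set G) = ⊥ :=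
    eq_bot_iff.2 fun g hg => hScent g fun s hs => (mem_centralizer_iff.1 hg s hs).symm
  have hblock := isBlock_coe_of_forall_mem_iff fun k hk => apply_mul_inv_apply_mem_iff hSnormal hk
  have hmin : ∀ B : Set G, IsBlock (normalizer (starGroup S : Set (Equiv.Perm G))) B →
      (1 : G) ∈ B → 2 ≤ B.ncard → (S : Set G) ⊆ B := by
    intro B hB h1 hcard
    obtain ⟨H, hH, rfl⟩ := hB.exists_normal_eq (starGroup_top_le_normalizer hSnormal) h1
    refine le_of_normal_of_centralizer_eq_bot hcent fun hbot => ?_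
    simp [hbot] at hcard
  have hcardS : 2 ≤ (S : Set G).ncard := by
    rw [← Nat.card_coe_set_eq]
    exact Finite.one_lt_card_iff_nontrivial.2 inferInstance
  exact ⟨hblock, hmin, minBlock_eq hblock S.one_mem hcardS hmin⟩

/-- for `N = N_{Sym(G)}(S*)`, the set `S` is an `N`-block, every
`N`-block of size at least 2 containing the identity contains `S`, and the minimal
block of `N` coincides with `S`. -/
theorem minBlock_of_normalizer_eq_socle (G : Type*) [Group G] [Fintype G]
    (S : Subgroup G) (hSnormal : S.Normal) (hSsimple : IsSimpleGroup S)
    (hSnonabelian : ¬ ∀ a b : S, a * b = b * a)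
    (hScent : ∀ g : G, (∀ s ∈ S, g * s = s * g) → g = 1)
    : IsBlock (Subgroup.normalizer ((starGroup S : Subgroup (Equiv.Perm G)) : Set (Equiv.Perm G))) (S : Set G) ∧
    (∀ B : Set G, IsBlock (Subgroup.normalizer ((starGroup S : Subgroup (Equiv.Perm G)) : Set (Equiv.Perm G))) B → (1 : G) ∈ B → 2 ≤ B.ncard →
      (S : Set G) ⊆ B) ∧
    minBlock (Subgroup.normalizer ((starGroup S : Subgroup (Equiv.Perm G)) : Set (Equiv.Perm G))) = (S : Set G) :=
  minBlock_of_normalizer_eq_socle_general G S hSnormal hSsimple hScent
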